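/- Let x > 0 and z' = (x',y') with |x'| ≤ x, and suppose d((x,0),(x',y')) > 3x, where d is the Grushin quasidistance. Then d((x,0),(x',y')) = sqrt(|y'|). -/
import Mathlib


/-- The Grushin plane quasidistance, with the convention that the quotient
`|y1 - y2| / max |x1| |x2|` is interpreted as `+INF` (so the min picks the
square root) when the denominator vanishes. -/
noncomputable def grushinD (z1 z2 : ℝ × ℝ) : ℝ :=
  max |z1.1 - z2.1|
    (min (Real.sqrt |z1.2 - z2.2|)
      (if max |z1.1| |z2.1| = 0 then Real.sqrt |z1.2 - z2.2|
       else |z1.2 - z2.2| / max |z1.1| |z2.1|))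

/-- Case 3.1: if `x > 0`, `|x'| ≤ x` and `d((x,0),(x',y')) > 3x`, then
`d((x,0),(x',y')) = sqrt |y'|`. -/
theorem grushinD_case_far (x x' y' : ℝ) (hx : 0 < x) (hx' : |x'| ≤ x)
    (hfar : 3 * x < grushinD (x, 0) (x', y')) :
    grushinD (x, 0) (x', y') = Real.sqrt |y'| := by
  have hmx : max |x| |x'| = x := by
    rw [abs_of_pos hx]; exact max_eq_left hx'
  have hy : |(0 : ℝ) - y'| = |y'| := by rw [zero_sub, abs_neg]
  simp only [grushinD, hy, hmx, if_neg hx.ne'] at hfar ⊢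
  have habs : |x - x'| ≤ 2 * x := by
    have := abs_sub_abs_le_abs_sub x x'
    have h2 := abs_sub x x'
    calc |x - x'| ≤ |x| + |x'| := abs_sub _ _
      _ ≤ 2 * x := by rw [abs_of_pos hx]; linarith
  have hlt : |x - x'| < 3 * x := lt_of_le_of_lt habs (by linarith)
  have hmax : max |x - x'| (min (Real.sqrt |y'|) (|y'| / x)) =
      min (Real.sqrt |y'|) (|y'| / x) := by
    rcases max_choice |x - x'| (min (Real.sqrt |y'|) (|y'| / x)) with h | h
    · rw [h] at hfar; linarith
    · exact h
  rw [hmax] at hfar ⊢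
  have hs := Real.sq_sqrt (abs_nonneg y')
  have hsn := Real.sqrt_nonneg |y'|
  have hle : Real.sqrt |y'| ≤ |y'| / x := by
    rw [le_div_iff₀ hx]
    rcases le_or_gt (Real.sqrt |y'|) (|y'| / x) with h | h
    · rw [min_eq_left h] at hfar
      nlinarith
    · rw [min_eq_right h.le] at hfar
      rw [lt_div_iff₀ hx] at hfar
      nlinarith
  exact min_eq_left hle
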